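/- arXiv:2012.09725 — 4 statements merged into one kernel-verified Lean document; each statement's English description precedes it below -/
import Mathlib

section
/- Let n ≥ 2, m > 0, and define f : 2^E → ℝ by f(S) = |S| if |S| ≤ ⌊n/2⌋ and f(S) = m·2^{|S|+1} + |S| otherwise. Then f is supermodular: f(S) + f(T) ≤ f(S ∪ T) + f(S ∩ T) for all S, T ⊆ E. -/
/-!
A function of the form `S ↦ g #S` is supermodular as soon as `g : ℕ → ℝ` is discretely convex,
i.e. its increments `g (k + 1) - g k` are monotone: with `a = #(S ∩ T)`, `s = #S`, `t = #T` and
`u = #(S ∪ T) = t + (s - a)`, the increase of `g` over `[a, s]` is at most its increase over the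
translated interval `[t, u]`. For the given `f`, the increments of `g` are `1` below `⌊n/2⌋`,
`m 2^(⌊n/2⌋+2) + 1` across it and `m 2^(k+1) + 1` above it, hence nondecreasing since `m > 0`.
-/

open Finset

section MonotoneIncrements

variable {β : Type*} [AddCommGroup β] [PartialOrder β] [IsOrderedAddMonoid β] {g : ℕ → β}

theorem sub_le_sub_of_monotone_increments (hg : Monotone fun k => g (k + 1) - g k) {a t : ℕ}
    (hat : a ≤ t) (d : ℕ) : g (a + d) - g a ≤ g (t + d) - g t := by
  induction d with
  | zero => simp
  | succ d ih =>
    have hstep : g (a + d + 1) - g (a + d) ≤ g (t + d + 1) - g (t + d) := hg (by omega)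
    calc g (a + (d + 1)) - g a = (g (a + d) - g a) + (g (a + d + 1) - g (a + d)) := by
          rw [← add_assoc]; abel
      _ ≤ (g (t + d) - g t) + (g (t + d + 1) - g (t + d)) := add_le_add ih hstep
      _ = g (t + (d + 1)) - g t := by rw [← add_assoc]; abel

theorem add_le_add_of_monotone_increments (hg : Monotone fun k => g (k + 1) - g k)
    {a s t u : ℕ} (has : a ≤ s) (hat : a ≤ t) (hsum : s + t = u + a) :
    g s + g t ≤ g u + g a := by
  obtain ⟨d, rfl⟩ : ∃ d, s = a + d := ⟨s - a, by omega⟩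
  obtain rfl : u = t + d := by omega
  have := sub_le_sub_of_monotone_increments hg hat d
  rwa [sub_le_sub_iff] at this

theorem Finset.card_comp_supermodular_of_monotone_increments {α : Type*} [DecidableEq α]
    (hg : Monotone fun k => g (k + 1) - g k) (S T : Finset α) :
    g #S + g #T ≤ g #(S ∪ T) + g #(S ∩ T) :=
  add_le_add_of_monotone_increments hg (card_le_card inter_subset_left)
    (card_le_card inter_subset_right) (card_union_add_card_inter S T).symm

end MonotoneIncrements

def thresholdExp (m : ℝ) (h k : ℕ) : ℝ :=
  if k ≤ h then k else m * 2 ^ (k + 1) + k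

theorem thresholdExp_monotone_increments {m : ℝ} (hm : 0 ≤ m) (h : ℕ) :
    Monotone fun k => thresholdExp m h (k + 1) - thresholdExp m h k := by
  refine monotone_nat_of_le_succ fun k => ?_
  have hpos : 0 ≤ m * 2 ^ (k + 1) := by positivity
  simp only [thresholdExp, pow_succ] at hpos ⊢
  split_ifs <;> first | omega | (push_cast; nlinarith)

theorem stmt_6_general {α : Type*} [DecidableEq α] (E : Finset α) (n : ℕ)
    (m : ℝ) (hm : 0 < m)
    (f : Finset α → ℝ)
    (hf : ∀ S : Finset α, f S =
      if S.card ≤ n / 2 then (S.card : ℝ) else m * 2 ^ (S.card + 1) + (S.card : ℝ)) :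
    ∀ S T : Finset α, S ⊆ E → T ⊆ E →
      f S + f T ≤ f (S ∪ T) + f (S ∩ T) := by
  intro S T _ _
  simp only [hf]
  exact card_comp_supermodular_of_monotone_increments (g := thresholdExp m (n / 2))
    (thresholdExp_monotone_increments hm.le (n / 2)) S T

theorem stmt_6 {α : Type*} [DecidableEq α] (E : Finset α) (n : ℕ) (hn : 2 ≤ n)
    (hE : E.card = n) (m : ℝ) (hm : 0 < m)
    (f : Finset α → ℝ)
    (hf : ∀ S : Finset α, f S =
      if S.card ≤ n / 2 then (S.card : ℝ) else m * 2 ^ (S.card + 1) + (S.card : ℝ)) :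
    ∀ S T : Finset α, S ⊆ E → T ⊆ E →
      f S + f T ≤ f (S ∪ T) + f (S ∩ T) :=
  stmt_6_general E n m hm f hf
end

section
/- Let n ≥ 2 and 0 < ε ≤ n/(n+2), and define g : 2^E → ℝ by g(S) = (2|S|/n)·ε if |S| ≤ ⌊n/2⌋ and g(S) = 2(|S| − ⌊n/2⌋) otherwise. Then g is supermodular. -/
/-!
On integers the two branches of `g` are the two pieces of the convex function
`φ x = max (2 ε x / n) (2 (x - ⌊n/2⌋))`: below the threshold the second piece is nonpositive, and
above it the bound `ε ≤ n / (n + 2)` keeps the first piece below the second. So `g S = φ |S|`, and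
a convex function of the cardinality is supermodular, because `|S ∩ T| ≤ |S|, |T| ≤ |S ∪ T|` and
`|S| + |T| = |S ∪ T| + |S ∩ T|`.
-/

open Finset

theorem ConvexOn.add_le_add_of_add_eq {𝕜 : Type*} [Field 𝕜] [LinearOrder 𝕜]
    [IsStrictOrderedRing 𝕜] {s : Set 𝕜} {f : 𝕜 → 𝕜} (hf : ConvexOn 𝕜 s f) {a b c d : 𝕜}
    (hc : c ∈ s) (hd : d ∈ s) (hca : c ≤ a) (had : a ≤ d) (habcd : a + b = c + d) :
    f a + f b ≤ f c + f d := by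
  rcases (hca.trans had).eq_or_lt with rfl | hcd
  · obtain rfl : a = c := le_antisymm had hca
    obtain rfl : b = a := by linear_combination habcd
    rfl
  have hdc : 0 < d - c := sub_pos.2 hcd
  set t := (d - a) / (d - c) with ht
  have ht₀ : 0 ≤ t := div_nonneg (sub_nonneg.2 had) hdc.le
  have ht₁ : 0 ≤ 1 - t := by rw [sub_nonneg, ht, div_le_one hdc]; linarith
  have ha : t * c + (1 - t) * d = a := by rw [ht]; field_simp; ring
  have hb : (1 - t) * c + t * d = b := by linear_combination -habcd - ha
  have hfa := hf.2 hc hd ht₀ ht₁ (by ring)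
  have hfb := hf.2 hc hd ht₁ ht₀ (by ring)
  simp only [smul_eq_mul, ha, hb] at hfa hfb
  linarith

theorem ConvexOn.comp_card_add_le {α : Type*} [DecidableEq α] {f : ℝ → ℝ}
    (hf : ConvexOn ℝ (Set.Ici 0) f) (S T : Finset α) :
    f #S + f #T ≤ f #(S ∪ T) + f #(S ∩ T) := by
  wlog hST : #S ≤ #T generalizing S T
  · simpa only [add_comm (f #S), union_comm, inter_comm] using this T S (le_of_not_ge hST)
  rw [add_comm (f #(S ∪ T))]
  refine hf.add_le_add_of_add_eq (Set.mem_Ici.2 (Nat.cast_nonneg _))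
    (Set.mem_Ici.2 (Nat.cast_nonneg _)) ?_ ?_ ?_
  · exact_mod_cast card_le_card inter_subset_left
  · exact_mod_cast hST.trans (card_le_card subset_union_right)
  · exact_mod_cast (card_union_add_card_inter S T).symm.trans (add_comm _ _)

/-- The convex function `φ` of the header, with `m` in place of `⌊n/2⌋`. -/
noncomputable def profile (n m : ℕ) (ε x : ℝ) : ℝ :=
  max (2 * x / n * ε) (2 * (x - m))

lemma convexOn_profile (n m : ℕ) (ε : ℝ) : ConvexOn ℝ Set.univ (profile n m ε) := by
  refine ConvexOn.sup ⟨convex_univ, fun x _ y _ a b _ _ hab => le_of_eq ?_⟩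
    ⟨convex_univ, fun x _ y _ a b _ _ hab => le_of_eq ?_⟩ <;> simp only [smul_eq_mul]
  · ring
  · linear_combination 2 * (m : ℝ) * hab

lemma profile_natCast {n m : ℕ} {ε : ℝ} (hn : 0 < n) (hmn : m ≤ n + 1) (hε : 0 ≤ ε)
    (hε' : ε ≤ n / (n + 2)) (k : ℕ) :
    profile n m ε k = if k ≤ m then 2 * (k : ℝ) / n * ε else 2 * ((k : ℝ) - m) := by
  have hnR : (0 : ℝ) < n := by exact_mod_cast hn
  unfold profile
  split_ifs with hkm
  · refine max_eq_left ?_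
    have : (k : ℝ) ≤ m := by exact_mod_cast hkm
    have : 0 ≤ 2 * (k : ℝ) / n * ε := by positivity
    linarith
  · refine max_eq_right ?_
    have hk : (m : ℝ) + 1 ≤ k := by exact_mod_cast Nat.lt_of_not_le hkm
    have hm : (m : ℝ) ≤ n + 1 := by exact_mod_cast hmn
    have hk₀ : (0 : ℝ) ≤ k := by positivity
    rw [le_div_iff₀ (by positivity)] at hε'
    rw [div_mul_eq_mul_div, div_le_iff₀ hnR]
    -- `k ε (n + 2) ≤ k n ≤ (k - m) n (n + 2)`, the last step since `k ≥ m + 1` and `m ≤ n + 1`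
    nlinarith [mul_le_mul_of_nonneg_left hε' hk₀, mul_nonneg hnR.le (sub_nonneg.2 hk),
      mul_nonneg hnR.le (sub_nonneg.2 hm)]

theorem stmt_8_general {α : Type*} [DecidableEq α] (E : Finset α) (n : ℕ)
    (ε : ℝ) (hε : 0 < ε) (hε' : ε ≤ (n : ℝ) / ((n : ℝ) + 2))
    (g : Finset α → ℝ)
    (hg : ∀ S : Finset α, g S =
      if S.card ≤ n / 2 then 2 * (S.card : ℝ) / (n : ℝ) * ε
      else 2 * ((S.card : ℝ) - ((n / 2 : ℕ) : ℝ))) :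
    ∀ S T : Finset α, S ⊆ E → T ⊆ E →
      g S + g T ≤ g (S ∪ T) + g (S ∩ T) := by
  intro S T _ _
  have hn₀ : 0 < n := by
    rw [Nat.pos_iff_ne_zero]
    rintro rfl
    simp only [CharP.cast_eq_zero, zero_add, zero_div] at hε'
    linarith
  have hg_profile : ∀ S : Finset α, g S = profile n (n / 2) ε #S := fun S =>
    (hg S).trans (profile_natCast hn₀ (by omega) hε.le hε' #S).symm
  simp only [hg_profile]
  exact ((convexOn_profile n (n / 2) ε).subset (Set.subset_univ _)
    (convex_Ici 0)).comp_card_add_le S T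

theorem stmt_8 {α : Type*} [DecidableEq α] (E : Finset α) (n : ℕ) (hn : 2 ≤ n)
    (hE : E.card = n) (ε : ℝ) (hε : 0 < ε) (hε' : ε ≤ (n : ℝ) / ((n : ℝ) + 2))
    (g : Finset α → ℝ)
    (hg : ∀ S : Finset α, g S =
      if S.card ≤ n / 2 then 2 * (S.card : ℝ) / (n : ℝ) * ε
      else 2 * ((S.card : ℝ) - ((n / 2 : ℕ) : ℝ))) :
    ∀ S T : Finset α, S ⊆ E → T ⊆ E →
      g S + g T ≤ g (S ∪ T) + g (S ∩ T) :=
  stmt_8_general E n ε hε hε' g hg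
end

section
/- With f and g as defined (f(S) = |S| or m·2^{|S|+1}+|S|; g(S) = (2|S|/n)ε or 2(|S|−⌊n/2⌋), threshold ⌊n/2⌋), for every nonempty S ⊆ E the ratio h(S) = f(S)/g(S) satisfies h(S) ≥ min(n/(2ε), m). -/
/-! Below the threshold `h S = n / (2ε)` identically; above it the numerator is at least
`m · 2^{|S|+1} ≥ m · 2|S|`, which dominates `m` times the denominator `2(|S| - ⌊n/2⌋)`. -/

lemma div_two_mul_div_mul_eq {K : Type*} [Field K] {k n : K} (hk : k ≠ 0) (ε : K) :
    k / (2 * k / n * ε) = n / (2 * ε) := by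
  rw [show 2 * k / n * ε = k * (2 * ε / n) by ring, div_mul_cancel_left₀ hk, inv_div]

lemma le_mul_two_pow_succ_add_div {m : ℝ} (hm : 0 ≤ m) {k d : ℕ} (hdk : d < k) :
    m ≤ (m * 2 ^ (k + 1) + k) / (2 * ((k : ℝ) - d)) := by
  have hdk' : (d : ℝ) + 1 ≤ k := by exact_mod_cast hdk
  have hk_le : (k : ℝ) ≤ 2 ^ k := by exact_mod_cast Nat.lt_two_pow_self.le
  rw [le_div_iff₀ (by linarith)]
  calc m * (2 * ((k : ℝ) - d)) ≤ m * 2 ^ (k + 1) := by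
        gcongr
        rw [pow_succ]
        linarith [(d.cast_nonneg : (0 : ℝ) ≤ d)]
    _ ≤ m * 2 ^ (k + 1) + k := le_add_of_nonneg_right k.cast_nonneg

theorem stmt_9_general {α : Type*} [DecidableEq α] (E : Finset α) (n : ℕ)
    (m ε : ℝ) (hm : 0 < m)
    (f g h : Finset α → ℝ)
    (hf : ∀ S : Finset α, f S =
      if S.card ≤ n / 2 then (S.card : ℝ) else m * 2 ^ (S.card + 1) + (S.card : ℝ))
    (hg : ∀ S : Finset α, g S =
      if S.card ≤ n / 2 then 2 * (S.card : ℝ) / (n : ℝ) * ε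
      else 2 * ((S.card : ℝ) - ((n / 2 : ℕ) : ℝ)))
    (hh : ∀ S : Finset α, h S = f S / g S) :
    ∀ S : Finset α, S ⊆ E → S ≠ ∅ →
      min ((n : ℝ) / (2 * ε)) m ≤ h S := by
  intro S _ hS
  have hcard : S.card ≠ 0 := Finset.card_ne_zero.mpr (Finset.nonempty_iff_ne_empty.mpr hS)
  rw [hh, hf, hg]
  split_ifs with hsmall
  · rw [div_two_mul_div_mul_eq (Nat.cast_ne_zero.mpr hcard)]
    exact min_le_left _ _
  · exact (min_le_right _ _).trans (le_mul_two_pow_succ_add_div hm.le (not_le.mp hsmall))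

theorem stmt_9 {α : Type*} [DecidableEq α] (E : Finset α) (n : ℕ) (hn : 2 ≤ n)
    (hE : E.card = n) (m ε : ℝ) (hm : 0 < m)
    (hε : 0 < ε) (hε' : ε ≤ (n : ℝ) / ((n : ℝ) + 2))
    (f g h : Finset α → ℝ)
    (hf : ∀ S : Finset α, f S =
      if S.card ≤ n / 2 then (S.card : ℝ) else m * 2 ^ (S.card + 1) + (S.card : ℝ))
    (hg : ∀ S : Finset α, g S =
      if S.card ≤ n / 2 then 2 * (S.card : ℝ) / (n : ℝ) * ε
      else 2 * ((S.card : ℝ) - ((n / 2 : ℕ) : ℝ)))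
    (hh : ∀ S : Finset α, h S = f S / g S) :
    ∀ S : Finset α, S ⊆ E → S ≠ ∅ →
      min ((n : ℝ) / (2 * ε)) m ≤ h S :=
  stmt_9_general E n m ε hm f g h hf hg hh
end

section
/- Fix R ⊆ E with |R| = ⌊n/2⌋ and define g_R(S) = g(S) for S ≠ R and g_R(R) = 1, where g(S) = (2|S|/n)ε if |S| ≤ ⌊n/2⌋ and g(S) = 2(|S|−⌊n/2⌋) otherwise. If 0 < ε ≤ n/(n+2) and n ≥ 2, then g_R is monotone non-decreasing. -/
/-!
Below the threshold `⌊n/2⌋` the weight `g` is at most `ε ≤ 1`, above it at least `2`, and on either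
side it grows with the cardinality. So `g` is monotone, and raising its value at the single set `R`
of threshold size to `1` keeps it monotone: every proper subset of `R` has weight `≤ 1` and every
proper superset weight `≥ 1`.
-/

/-- The weight `g(S)` as a function of `k = |S|`, with threshold `m` (the paper's `⌊n/2⌋`). -/
noncomputable def cardWeight (n m : ℕ) (ε : ℝ) (k : ℕ) : ℝ :=
  if k ≤ m then 2 * (k : ℝ) / (n : ℝ) * ε else 2 * ((k : ℝ) - (m : ℝ))

section cardWeight

variable {n m k : ℕ} {ε : ℝ}

theorem cardWeight_le_one (hn : 0 < n) (hm : 2 * m ≤ n) (hε₀ : 0 ≤ ε) (hε₁ : ε ≤ 1)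
    (hk : k ≤ m) : cardWeight n m ε k ≤ 1 := by
  have hkn : (2 * k : ℝ) ≤ n := by exact_mod_cast (Nat.mul_le_mul_left 2 hk).trans hm
  rw [cardWeight, if_pos hk]
  exact mul_le_one₀ ((div_le_one (by exact_mod_cast hn)).2 hkn) hε₀ hε₁

theorem one_le_cardWeight (hk : m < k) : 1 ≤ cardWeight n m ε k := by
  have hmk : (m : ℝ) + 1 ≤ k := by exact_mod_cast hk
  rw [cardWeight, if_neg hk.not_ge]
  linarith

theorem cardWeight_monotone (hn : 0 < n) (hm : 2 * m ≤ n) (hε₀ : 0 ≤ ε) (hε₁ : ε ≤ 1) :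
    Monotone (cardWeight n m ε) := by
  intro a b hab
  have hab' : (a : ℝ) ≤ b := by exact_mod_cast hab
  by_cases hb : b ≤ m
  · rw [cardWeight, cardWeight, if_pos (hab.trans hb), if_pos hb]
    gcongr
  by_cases ha : a ≤ m
  · exact (cardWeight_le_one hn hm hε₀ hε₁ ha).trans (one_le_cardWeight (not_le.1 hb))
  · rw [cardWeight, cardWeight, if_neg ha, if_neg hb]
    linarith

end cardWeight

theorem Monotone.update_of_le_of_ge {α β : Type*} [PartialOrder α] [Preorder β] [DecidableEq α]
    {f : α → β} (hf : Monotone f) {a : α} {b : β} (hlt : ∀ x < a, f x ≤ b)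
    (hgt : ∀ x, a < x → b ≤ f x) : Monotone (Function.update f a b) := by
  intro x y hxy
  rcases eq_or_ne x a with rfl | hx <;> rcases eq_or_ne y x with rfl | hy
  · exact le_rfl
  · rw [Function.update_self, Function.update_of_ne hy]
    exact hgt y (lt_of_le_of_ne hxy hy.symm)
  · exact le_rfl
  · rw [Function.update_of_ne hx]
    rcases eq_or_ne y a with rfl | hya
    · rw [Function.update_self]
      exact hlt x (lt_of_le_of_ne hxy hx)
    · rw [Function.update_of_ne hya]
      exact hf hxy

theorem stmt_11_general {α : Type*} [DecidableEq α] (E : Finset α) (n : ℕ) (hn : 2 ≤ n)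
    (R : Finset α) (hRcard : R.card = n / 2)
    (ε : ℝ) (hε : 0 < ε) (hε' : ε ≤ (n : ℝ) / ((n : ℝ) + 2))
    (g gR : Finset α → ℝ)
    (hg : ∀ S : Finset α, g S =
      if S.card ≤ n / 2 then 2 * (S.card : ℝ) / (n : ℝ) * ε
      else 2 * ((S.card : ℝ) - ((n / 2 : ℕ) : ℝ)))
    (hgR : ∀ S : Finset α, gR S = if S = R then 1 else g S) :
    ∀ S T : Finset α, S ⊆ T → T ⊆ E → gR S ≤ gR T := by
  have hn₀ : 0 < n := by omega
  have hm : 2 * (n / 2) ≤ n := Nat.mul_div_le n 2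
  have hε₁ : ε ≤ 1 := hε'.trans (div_le_one_of_le₀ (by linarith) (by positivity))
  have hg_eq : g = fun S => cardWeight n (n / 2) ε S.card := funext hg
  have hgR_eq : gR = Function.update g R 1 := by
    funext S
    rw [hgR, Function.update_apply]
  have hmono : Monotone gR := by
    rw [hgR_eq, hg_eq]
    refine ((cardWeight_monotone hn₀ hm hε.le hε₁).comp Finset.card_mono).update_of_le_of_ge
      (fun S hS => cardWeight_le_one hn₀ hm hε.le hε₁ ?_) (fun T hT => one_le_cardWeight ?_)
    · exact hRcard ▸ (Finset.card_lt_card hS).le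
    · exact hRcard ▸ Finset.card_lt_card hT
  exact fun S T hST _ => hmono hST

theorem stmt_11 {α : Type*} [DecidableEq α] (E : Finset α) (n : ℕ) (hn : 2 ≤ n)
    (hE : E.card = n) (R : Finset α) (hR : R ⊆ E) (hRcard : R.card = n / 2)
    (ε : ℝ) (hε : 0 < ε) (hε' : ε ≤ (n : ℝ) / ((n : ℝ) + 2))
    (g gR : Finset α → ℝ)
    (hg : ∀ S : Finset α, g S =
      if S.card ≤ n / 2 then 2 * (S.card : ℝ) / (n : ℝ) * ε
      else 2 * ((S.card : ℝ) - ((n / 2 : ℕ) : ℝ)))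
    (hgR : ∀ S : Finset α, gR S = if S = R then 1 else g S) :
    ∀ S T : Finset α, S ⊆ T → T ⊆ E → gR S ≤ gR T :=
  stmt_11_general E n hn R hRcard ε hε hε' g gR hg hgR
end
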